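/- arXiv:2007.05864 — 6 statements merged into one kernel-verified Lean document; each statement's English description precedes it below -/
import Mathlib

section
/- Let n, m, σ² with σ² ≥ 0, and suppose K_XX + σ²I and Θ_XX + σ²I are invertible. Set U = Θ_X'X(Θ_XX + σ²I)⁻¹ − K_X'X(K_XX + σ²I)⁻¹ ∈ ℝ^{m×n}. Then Σ_RP − Σ_NNGP = U (K_XX + σ²I) Uᵀ. In particular, if K_XX is positive semidefinite then Σ_RP − Σ_NNGP is positive semidefinite. -/
open Matrix

section

variable {m n R : Type*} [Fintype n] [DecidableEq n] [CommRing R]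

theorem sub_mul_inv_mul_mul_sub_inv_mul {A : Matrix n n R} (hA : IsUnit A.det)
    (B : Matrix n n R) (P Q : Matrix m n R) (P' Q' : Matrix n m R) :
    (P * B - Q * A⁻¹) * A * (B * P' - A⁻¹ * Q')
      = P * B * A * B * P' - P * B * Q' - Q * B * P' + Q * A⁻¹ * Q' := by
  simp only [Matrix.sub_mul, Matrix.mul_sub, Matrix.mul_assoc, mul_nonsing_inv_cancel_left _ _ hA,
    nonsing_inv_mul_cancel_left _ _ hA]
  abel

end

theorem stmt0_general (n m : ℕ) (σ2 : ℝ) (hσ : 0 ≤ σ2)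
    (ΘXX KXX : Matrix (Fin n) (Fin n) ℝ) (hΘsymm : ΘXX.IsSymm) (hKsymm : KXX.IsSymm)
    (ΘXX' KXX' : Matrix (Fin n) (Fin m) ℝ)
    (KX'X' : Matrix (Fin m) (Fin m) ℝ)
    (hKinv : IsUnit (KXX + σ2 • (1 : Matrix (Fin n) (Fin n) ℝ)).det) :
    let ΘX'X := ΘXX'ᵀ
    let KX'X := KXX'ᵀ
    let SigNNGP := KX'X' - KX'X * (KXX + σ2 • 1)⁻¹ * KXX'
    let SigRP := KX'X' - ΘX'X * (ΘXX + σ2 • 1)⁻¹ * KXX'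
      - KX'X * (ΘXX + σ2 • 1)⁻¹ * ΘXX'
      + ΘX'X * (ΘXX + σ2 • 1)⁻¹ * (KXX + σ2 • 1) * (ΘXX + σ2 • 1)⁻¹ * ΘXX'
    let U := ΘX'X * (ΘXX + σ2 • 1)⁻¹ - KX'X * (KXX + σ2 • 1)⁻¹
    SigRP - SigNNGP = U * (KXX + σ2 • 1) * Uᵀ ∧
      (KXX.PosSemidef → (SigRP - SigNNGP).PosSemidef) := by
  intro ΘX'X KX'X SigNNGP SigRP U
  have hΘ : (ΘXX + σ2 • 1).IsSymm := hΘsymm.add (isSymm_one.smul σ2)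
  have hK : (KXX + σ2 • 1).IsSymm := hKsymm.add (isSymm_one.smul σ2)
  have hUT : Uᵀ = (ΘXX + σ2 • 1)⁻¹ * ΘXX' - (KXX + σ2 • 1)⁻¹ * KXX' := by
    simp only [U, ΘX'X, KX'X, transpose_sub, transpose_mul, transpose_transpose, hΘ.inv.eq,
      hK.inv.eq]
  have hdiff : SigRP - SigNNGP = U * (KXX + σ2 • 1) * Uᵀ := by
    rw [hUT, sub_mul_inv_mul_mul_sub_inv_mul hKinv]
    simp only [SigRP, SigNNGP]
    abel
  refine ⟨hdiff, fun hKpsd => hdiff ▸ ?_⟩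
  simpa using (hKpsd.add (PosSemidef.one.smul hσ)).mul_mul_conjTranspose_same U

/-- With `U = Θ_X'X (Θ_XX + σ²I)⁻¹ − K_X'X (K_XX + σ²I)⁻¹`, we have
`Σ_RP − Σ_NNGP = U (K_XX + σ²I) Uᵀ`; in particular if `K_XX` is positive semidefinite
then `Σ_RP − Σ_NNGP` is positive semidefinite. -/
theorem stmt0 (n m : ℕ) (hn : 0 < n) (hm : 0 < m) (σ2 : ℝ) (hσ : 0 ≤ σ2)
    (ΘXX KXX : Matrix (Fin n) (Fin n) ℝ) (hΘsymm : ΘXX.IsSymm) (hKsymm : KXX.IsSymm)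
    (ΘXX' KXX' : Matrix (Fin n) (Fin m) ℝ)
    (ΘX'X' KX'X' : Matrix (Fin m) (Fin m) ℝ)
    (hKinv : IsUnit (KXX + σ2 • (1 : Matrix (Fin n) (Fin n) ℝ)).det)
    (hΘinv : IsUnit (ΘXX + σ2 • (1 : Matrix (Fin n) (Fin n) ℝ)).det) :
    let ΘX'X := ΘXX'ᵀ
    let KX'X := KXX'ᵀ
    let SigNNGP := KX'X' - KX'X * (KXX + σ2 • 1)⁻¹ * KXX'
    let SigRP := KX'X' - ΘX'X * (ΘXX + σ2 • 1)⁻¹ * KXX'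
      - KX'X * (ΘXX + σ2 • 1)⁻¹ * ΘXX'
      + ΘX'X * (ΘXX + σ2 • 1)⁻¹ * (KXX + σ2 • 1) * (ΘXX + σ2 • 1)⁻¹ * ΘXX'
    let U := ΘX'X * (ΘXX + σ2 • 1)⁻¹ - KX'X * (KXX + σ2 • 1)⁻¹
    SigRP - SigNNGP = U * (KXX + σ2 • 1) * Uᵀ ∧
      (KXX.PosSemidef → (SigRP - SigNNGP).PosSemidef) :=
  stmt0_general n m σ2 hσ ΘXX KXX hΘsymm hKsymm ΘXX' KXX' KX'X' hKinv
end

section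
/- (Proposition 2, noiseless case.) Suppose σ² = 0, the (n+m)×(n+m) block matrices Θ = [[Θ_XX, Θ_XX'],[Θ_X'X, Θ_X'X']] and K = [[K_XX, K_XX'],[K_X'X, K_X'X']] are both positive semidefinite, Θ − K is positive semidefinite, and Θ_XX and K_XX are invertible. Then Σ_NTKGP − Σ_DE and Σ_DE − Σ_NNGP are both positive semidefinite, where Σ_DE denotes Σ_RP evaluated at σ² = 0. -/
/-!
With `P = Θ_XX⁻¹ Θ_XX'` and `Q = K_XX⁻¹ K_XX'`, the three predictive covariances are residual
covariances of `f(X') - Rᵀ f(X)`: `Σ_NTKGP` under `Θ` with `R = P`, `Σ_DE` under `K` with `R = P`,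
and `Σ_NNGP` under `K` with `R = Q`. A residual covariance is the congruence `Vᵀ M V` of the block
covariance `M` by `V = [-R; 1]`, so it is linear in `M` and positive semidefinite when `M` is; this
gives `Σ_NTKGP - Σ_DE ⪰ 0` from `Θ - K ⪰ 0`. Since `Q` solves the normal equations
`K_XX Q = K_XX'`, the residual covariance under `K` exceeds its value at `Q` by
`(P - Q)ᵀ K_XX (P - Q) ⪰ 0`, which is `Σ_DE - Σ_NNGP`.
-/

open Matrix

namespace Matrix

theorem fromBlocks_sub_fromBlocks {l n m o α : Type*} [AddGroup α] (A A' : Matrix n l α)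
    (B B' : Matrix n m α) (C C' : Matrix o l α) (D D' : Matrix o m α) :
    fromBlocks A B C D - fromBlocks A' B' C' D' =
      fromBlocks (A - A') (B - B') (C - C') (D - D') := by
  simp only [sub_eq_add_neg, fromBlocks_neg, fromBlocks_add]

variable {n m R : Type*} [Fintype n]

section CommRing

variable [CommRing R]

/-- The covariance of `y - Pᵀ x` when `(x, y)` has covariance `fromBlocks A B Bᵀ D`. -/
def residualCov (A : Matrix n n R) (B : Matrix n m R) (D : Matrix m m R) (P : Matrix n m R) :
    Matrix m m R :=
  D - Pᵀ * B - Bᵀ * P + Pᵀ * A * P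

theorem residualCov_eq_transpose_mul_fromBlocks_mul [Fintype m] [DecidableEq m]
    (A : Matrix n n R) (B : Matrix n m R) (D : Matrix m m R) (P : Matrix n m R) :
    residualCov A B D P =
      (fromRows (-P) (1 : Matrix m m R))ᵀ * fromBlocks A B Bᵀ D *
        fromRows (-P) (1 : Matrix m m R) := by
  rw [transpose_fromRows, fromCols_mul_fromBlocks, fromCols_mul_fromRows]
  simp only [residualCov, transpose_neg, transpose_one, Matrix.add_mul, Matrix.neg_mul,
    Matrix.one_mul, Matrix.mul_neg, Matrix.mul_one]
  abel

theorem residualCov_sub_residualCov (A A' : Matrix n n R) (B B' : Matrix n m R)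
    (D D' : Matrix m m R) (P : Matrix n m R) :
    residualCov A B D P - residualCov A' B' D' P = residualCov (A - A') (B - B') (D - D') P := by
  simp only [residualCov, transpose_sub, Matrix.mul_sub, Matrix.sub_mul]
  abel

variable {A : Matrix n n R} {B : Matrix n m R} {Q : Matrix n m R}

theorem residualCov_of_mul_eq (hQ : A * Q = B) (D : Matrix m m R) :
    residualCov A B D Q = D - Bᵀ * Q := by
  rw [residualCov, Matrix.mul_assoc, hQ]
  abel

theorem residualCov_sub_residualCov_of_mul_eq (hA : A.IsSymm) (hQ : A * Q = B)
    (D : Matrix m m R) (P : Matrix n m R) :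
    residualCov A B D P - residualCov A B D Q = (P - Q)ᵀ * A * (P - Q) := by
  have hQt : Qᵀ * A = Bᵀ := by rw [← hA.eq, ← transpose_mul, hQ]
  have hQB : Qᵀ * B = Bᵀ * Q := by rw [← hQt, Matrix.mul_assoc, hQ]
  simp only [residualCov, transpose_sub, Matrix.sub_mul, Matrix.mul_sub, hQt,
    Matrix.mul_assoc Pᵀ A Q, hQ, hQB]
  abel

end CommRing

variable [CommRing R] [PartialOrder R] [StarRing R] [TrivialStar R]

theorem PosSemidef.transpose_mul_mul_same [Finite m] {A : Matrix n n R} (hA : A.PosSemidef)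
    (C : Matrix n m R) : (Cᵀ * A * C).PosSemidef := by
  simpa only [conjTranspose_eq_transpose_of_trivial] using hA.conjTranspose_mul_mul_same C

theorem PosSemidef.residualCov [Fintype m] [DecidableEq m] {A : Matrix n n R}
    {B : Matrix n m R} {D : Matrix m m R} (h : (fromBlocks A B Bᵀ D).PosSemidef)
    (P : Matrix n m R) :
    (residualCov A B D P).PosSemidef := by
  rw [residualCov_eq_transpose_mul_fromBlocks_mul]
  exact h.transpose_mul_mul_same _

end Matrix

theorem stmt1_general (n m : ℕ)
    (ΘXX KXX : Matrix (Fin n) (Fin n) ℝ) (hΘsymm : ΘXX.IsSymm) (hKsymm : KXX.IsSymm)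
    (ΘXX' KXX' : Matrix (Fin n) (Fin m) ℝ)
    (ΘX'X' KX'X' : Matrix (Fin m) (Fin m) ℝ)
    (hK : (Matrix.fromBlocks KXX KXX' KXX'ᵀ KX'X').PosSemidef)
    (hΘK : (Matrix.fromBlocks ΘXX ΘXX' ΘXX'ᵀ ΘX'X' -
      Matrix.fromBlocks KXX KXX' KXX'ᵀ KX'X').PosSemidef)
    (hΘinv : IsUnit ΘXX.det) (hKinv : IsUnit KXX.det) :
    let ΘX'X := ΘXX'ᵀ
    let KX'X := KXX'ᵀ
    let SigNNGP := KX'X' - KX'X * KXX⁻¹ * KXX'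
    let SigDE := KX'X' - ΘX'X * ΘXX⁻¹ * KXX' - KX'X * ΘXX⁻¹ * ΘXX'
      + ΘX'X * ΘXX⁻¹ * KXX * ΘXX⁻¹ * ΘXX'
    let SigNTKGP := ΘX'X' - ΘX'X * ΘXX⁻¹ * ΘXX'
    (SigNTKGP - SigDE).PosSemidef ∧ (SigDE - SigNNGP).PosSemidef := by
  intro ΘX'X KX'X SigNNGP SigDE SigNTKGP
  set P := ΘXX⁻¹ * ΘXX'
  set Q := KXX⁻¹ * KXX'
  have hP : ΘXX * P = ΘXX' := by rw [← Matrix.mul_assoc, mul_nonsing_inv _ hΘinv, Matrix.one_mul]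
  have hQ : KXX * Q = KXX' := by rw [← Matrix.mul_assoc, mul_nonsing_inv _ hKinv, Matrix.one_mul]
  have hPt : Pᵀ = ΘX'X * ΘXX⁻¹ := by rw [transpose_mul, transpose_nonsing_inv, hΘsymm.eq]
  have hNTKGP : SigNTKGP = residualCov ΘXX ΘXX' ΘX'X' P := by
    rw [residualCov_of_mul_eq hP]
    simp only [SigNTKGP, ΘX'X, P, Matrix.mul_assoc]
  have hDE : SigDE = residualCov KXX KXX' KX'X' P := by
    simp only [residualCov, hPt, SigDE, KX'X, P, ← Matrix.mul_assoc]
  have hNNGP : SigNNGP = residualCov KXX KXX' KX'X' Q := by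
    rw [residualCov_of_mul_eq hQ]
    simp only [SigNNGP, KX'X, Q, Matrix.mul_assoc]
  rw [fromBlocks_sub_fromBlocks, ← transpose_sub] at hΘK
  have hKXX : KXX.PosSemidef := hK.submatrix Sum.inl
  constructor
  · rw [hNTKGP, hDE, residualCov_sub_residualCov]
    exact hΘK.residualCov P
  · rw [hDE, hNNGP, residualCov_sub_residualCov_of_mul_eq hKsymm hQ]
    exact hKXX.transpose_mul_mul_same _

/-- Proposition 2, noiseless case `σ² = 0`. If the block matrices
`Θ` and `K` are positive semidefinite, `Θ − K` is positive semidefinite, and `Θ_XX`, `K_XX`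
are invertible, then `Σ_NTKGP − Σ_DE` and `Σ_DE − Σ_NNGP` are positive semidefinite, where
`Σ_DE` is `Σ_RP` at `σ² = 0`. -/
theorem stmt1 (n m : ℕ) (hn : 0 < n) (hm : 0 < m)
    (ΘXX KXX : Matrix (Fin n) (Fin n) ℝ) (hΘsymm : ΘXX.IsSymm) (hKsymm : KXX.IsSymm)
    (ΘXX' KXX' : Matrix (Fin n) (Fin m) ℝ)
    (ΘX'X' KX'X' : Matrix (Fin m) (Fin m) ℝ)
    (hΘ : (Matrix.fromBlocks ΘXX ΘXX' ΘXX'ᵀ ΘX'X').PosSemidef)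
    (hK : (Matrix.fromBlocks KXX KXX' KXX'ᵀ KX'X').PosSemidef)
    (hΘK : (Matrix.fromBlocks ΘXX ΘXX' ΘXX'ᵀ ΘX'X' -
      Matrix.fromBlocks KXX KXX' KXX'ᵀ KX'X').PosSemidef)
    (hΘinv : IsUnit ΘXX.det) (hKinv : IsUnit KXX.det) :
    let ΘX'X := ΘXX'ᵀ
    let KX'X := KXX'ᵀ
    let SigNNGP := KX'X' - KX'X * KXX⁻¹ * KXX'
    let SigDE := KX'X' - ΘX'X * ΘXX⁻¹ * KXX' - KX'X * ΘXX⁻¹ * ΘXX'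
      + ΘX'X * ΘXX⁻¹ * KXX * ΘXX⁻¹ * ΘXX'
    let SigNTKGP := ΘX'X' - ΘX'X * ΘXX⁻¹ * ΘXX'
    (SigNTKGP - SigDE).PosSemidef ∧ (SigDE - SigNNGP).PosSemidef :=
  stmt1_general n m ΘXX KXX hΘsymm hKsymm ΘXX' KXX' ΘX'X' KX'X' hK hΘK hΘinv hKinv
end

section
/- (Proposition 2, noisy case.) Suppose σ² > 0, the (n+m)×(n+m) block matrices Θ = [[Θ_XX, Θ_XX'],[Θ_X'X, Θ_X'X']] and K = [[K_XX, K_XX'],[K_X'X, K_X'X']] are both positive semidefinite, and Θ − K is positive semidefinite. Then Σ_NTKGP − Σ_RP and Σ_RP − Σ_NNGP are both positive semidefinite. -/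
/-!
With `A = Θ_XX + σ²I` and `B = K_XX + σ²I`, both positive definite, completing the square gives
`Σ_RP - Σ_NNGP = Mᴴ B M` for `M = A⁻¹ Θ_XX' - B⁻¹ K_XX'`, while `Σ_NTKGP - Σ_RP` is the
compression `Xᴴ (Θ - K) X` of the block matrix `Θ - K` by the column block `X = [-A⁻¹ Θ_XX'; I]`,
because the noise cancels in `Θ_XX - K_XX = A - B`.
-/

open Matrix
open scoped ComplexOrder

namespace Matrix

theorem fromBlocks_sub {α l m n o : Type*} [Sub α] (A A' : Matrix n l α) (B B' : Matrix n m α)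
    (C C' : Matrix o l α) (D D' : Matrix o m α) :
    fromBlocks A B C D - fromBlocks A' B' C' D' =
      fromBlocks (A - A') (B - B') (C - C') (D - D') := by
  ext (_ | _) (_ | _) <;> rfl

variable {𝕜 : Type*} [RCLike 𝕜] {n m : Type*}

lemma PosSemidef.toBlocks₁₁ {M : Matrix (n ⊕ m) (n ⊕ m) 𝕜} (hM : M.PosSemidef) :
    M.toBlocks₁₁.PosSemidef :=
  hM.submatrix Sum.inl

lemma PosSemidef.posDef_add_smul_one [DecidableEq n] {A : Matrix n n 𝕜} (hA : A.PosSemidef)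
    {s : 𝕜} (hs : 0 < s) : (A + s • 1).PosDef :=
  PosDef.posSemidef_add hA (PosDef.one.smul hs)

variable [Fintype n] [Fintype m]

lemma PosSemidef.fromBlocks_conj_fromRows {A : Matrix n n 𝕜} {B : Matrix n m 𝕜}
    {C : Matrix m n 𝕜} {D : Matrix m m 𝕜} (h : (fromBlocks A B C D).PosSemidef)
    (X : Matrix n m 𝕜) : (Xᴴ * A * X + Xᴴ * B + C * X + D).PosSemidef := by
  classical
  have := h.conjTranspose_mul_mul_same (fromRows X 1)
  rw [Matrix.mul_assoc, fromBlocks_mul_fromRows, conjTranspose_fromRows_eq_fromCols_conjTranspose,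
    fromCols_mul_fromRows, conjTranspose_one, Matrix.one_mul] at this
  simpa only [Matrix.mul_one, Matrix.mul_add, Matrix.mul_assoc, add_assoc] using this

variable [DecidableEq n]

/- In terms of the regularised Gram matrices `A = Θ_XX + σ²I`, `B = K_XX + σ²I`:
`Σ_NNGP = gpCov B K_XX' K_X'X'`, `Σ_NTKGP = gpCov A Θ_XX' Θ_X'X'` and
`Σ_RP = rpCov A B Θ_XX' K_XX' K_X'X'`. -/
noncomputable def gpCov (A : Matrix n n 𝕜) (U : Matrix n m 𝕜) (D : Matrix m m 𝕜) : Matrix m m 𝕜 :=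
  D - Uᴴ * A⁻¹ * U

noncomputable def rpCov (A B : Matrix n n 𝕜) (U V : Matrix n m 𝕜) (E : Matrix m m 𝕜) :
    Matrix m m 𝕜 :=
  E - Uᴴ * A⁻¹ * V - Vᴴ * A⁻¹ * U + Uᴴ * A⁻¹ * B * A⁻¹ * U

lemma posSemidef_gpCov_sub_rpCov {A B : Matrix n n 𝕜} (hA : A.IsHermitian) (hA' : IsUnit A.det)
    {U V : Matrix n m 𝕜} {D E : Matrix m m 𝕜}
    (h : (fromBlocks (A - B) (U - V) (Uᴴ - Vᴴ) (D - E)).PosSemidef) :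
    (gpCov A U D - rpCov A B U V E).PosSemidef := by
  have hAU : (-(A⁻¹ * U))ᴴ = -(Uᴴ * A⁻¹) := by
    rw [conjTranspose_neg, conjTranspose_mul, hA.inv.eq]
  convert h.fromBlocks_conj_fromRows (-(A⁻¹ * U)) using 1
  simp only [gpCov, rpCov, hAU, Matrix.neg_mul, Matrix.mul_neg, Matrix.mul_sub,
    Matrix.sub_mul, ← Matrix.mul_assoc, nonsing_inv_mul_cancel_right _ _ hA']
  abel

lemma posSemidef_rpCov_sub_gpCov {A B : Matrix n n 𝕜} (hA : A.IsHermitian) (hB : B.PosDef)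
    (U V : Matrix n m 𝕜) (E : Matrix m m 𝕜) :
    (rpCov A B U V E - gpCov B V E).PosSemidef := by
  have hB' : IsUnit B.det := (isUnit_iff_isUnit_det B).mp hB.isUnit
  convert hB.posSemidef.conjTranspose_mul_mul_same (A⁻¹ * U - B⁻¹ * V) using 1
  simp only [gpCov, rpCov, conjTranspose_sub, conjTranspose_mul, hA.inv.eq, hB.isHermitian.inv.eq,
    Matrix.mul_sub, Matrix.sub_mul, ← Matrix.mul_assoc, nonsing_inv_mul_cancel_right _ _ hB',
    mul_nonsing_inv_cancel_right _ _ hB']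
  abel

end Matrix

theorem stmt2_general (n m : ℕ) (σ2 : ℝ) (hσ : 0 < σ2)
    (ΘXX KXX : Matrix (Fin n) (Fin n) ℝ)
    (ΘXX' KXX' : Matrix (Fin n) (Fin m) ℝ)
    (ΘX'X' KX'X' : Matrix (Fin m) (Fin m) ℝ)
    (hΘ : (Matrix.fromBlocks ΘXX ΘXX' ΘXX'ᵀ ΘX'X').PosSemidef)
    (hK : (Matrix.fromBlocks KXX KXX' KXX'ᵀ KX'X').PosSemidef)
    (hΘK : (Matrix.fromBlocks ΘXX ΘXX' ΘXX'ᵀ ΘX'X' -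
      Matrix.fromBlocks KXX KXX' KXX'ᵀ KX'X').PosSemidef) :
    let ΘX'X := ΘXX'ᵀ
    let KX'X := KXX'ᵀ
    let SigNNGP := KX'X' - KX'X * (KXX + σ2 • 1)⁻¹ * KXX'
    let SigRP := KX'X' - ΘX'X * (ΘXX + σ2 • 1)⁻¹ * KXX'
      - KX'X * (ΘXX + σ2 • 1)⁻¹ * ΘXX'
      + ΘX'X * (ΘXX + σ2 • 1)⁻¹ * (KXX + σ2 • 1) * (ΘXX + σ2 • 1)⁻¹ * ΘXX'
    let SigNTKGP := ΘX'X' - ΘX'X * (ΘXX + σ2 • 1)⁻¹ * ΘXX'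
    (SigNTKGP - SigRP).PosSemidef ∧ (SigRP - SigNNGP).PosSemidef := by
  intro _ _ _ _ _
  have hA : (ΘXX + σ2 • 1).PosDef := hΘ.toBlocks₁₁.posDef_add_smul_one hσ
  have hB : (KXX + σ2 • 1).PosDef := hK.toBlocks₁₁.posDef_add_smul_one hσ
  rw [fromBlocks_sub, ← add_sub_add_right_eq_sub ΘXX KXX (σ2 • 1)] at hΘK
  -- over `ℝ`, `ᴴ` unfolds to `ᵀ`
  exact ⟨posSemidef_gpCov_sub_rpCov hA.isHermitian ((isUnit_iff_isUnit_det _).mp hA.isUnit) hΘK,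
    posSemidef_rpCov_sub_gpCov hA.isHermitian hB ΘXX' KXX' KX'X'⟩

/-- Proposition 2, noisy case `σ² > 0`. If the block matrices `Θ` and `K`
are positive semidefinite and `Θ − K` is positive semidefinite, then `Σ_NTKGP − Σ_RP` and
`Σ_RP − Σ_NNGP` are positive semidefinite. -/
theorem stmt2 (n m : ℕ) (hn : 0 < n) (hm : 0 < m) (σ2 : ℝ) (hσ : 0 < σ2)
    (ΘXX KXX : Matrix (Fin n) (Fin n) ℝ) (hΘsymm : ΘXX.IsSymm) (hKsymm : KXX.IsSymm)
    (ΘXX' KXX' : Matrix (Fin n) (Fin m) ℝ)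
    (ΘX'X' KX'X' : Matrix (Fin m) (Fin m) ℝ)
    (hΘ : (Matrix.fromBlocks ΘXX ΘXX' ΘXX'ᵀ ΘX'X').PosSemidef)
    (hK : (Matrix.fromBlocks KXX KXX' KXX'ᵀ KX'X').PosSemidef)
    (hΘK : (Matrix.fromBlocks ΘXX ΘXX' ΘXX'ᵀ ΘX'X' -
      Matrix.fromBlocks KXX KXX' KXX'ᵀ KX'X').PosSemidef) :
    let ΘX'X := ΘXX'ᵀ
    let KX'X := KXX'ᵀ
    let SigNNGP := KX'X' - KX'X * (KXX + σ2 • 1)⁻¹ * KXX'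
    let SigRP := KX'X' - ΘX'X * (ΘXX + σ2 • 1)⁻¹ * KXX'
      - KX'X * (ΘXX + σ2 • 1)⁻¹ * ΘXX'
      + ΘX'X * (ΘXX + σ2 • 1)⁻¹ * (KXX + σ2 • 1) * (ΘXX + σ2 • 1)⁻¹ * ΘXX'
    let SigNTKGP := ΘX'X' - ΘX'X * (ΘXX + σ2 • 1)⁻¹ * ΘXX'
    (SigNTKGP - SigRP).PosSemidef ∧ (SigRP - SigNNGP).PosSemidef :=
  stmt2_general n m σ2 hσ ΘXX KXX ΘXX' KXX' ΘX'X' KX'X' hΘ hK hΘK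
end

section
/- (Identity (27) in the proof of Proposition 2.) Suppose σ² ≥ 0, Θ_XX + σ²I is invertible, and the (n+m)×(n+m) block matrix Δ := Θ − K (with blocks Δ_XX = Θ_XX − K_XX, Δ_XX' = Θ_XX' − K_XX', Δ_X'X = Δ_XX'ᵀ, Δ_X'X' = Θ_X'X' − K_X'X') is positive semidefinite. Let G be an n×n matrix satisfying Δ_XX G Δ_XX = Δ_XX (a generalised inverse of Δ_XX). Define U₁ = Δ_X'X' − Δ_X'X G Δ_XX' and U₂ = Θ_X'X(Θ_XX + σ²I)⁻¹ − Δ_X'X G. Then Σ_NTKGP − Σ_RP = U₁ + U₂ Δ_XX U₂ᵀ. -/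
/-!
Write `Δ = Θ − K` and `A = (Θ_XX + σ²I)⁻¹`, so that
`Σ_NTKGP − Σ_RP = Δ_X'X' − Θ_X'X A Δ_XX' − Δ_X'X A Θ_XX' + Θ_X'X A Δ_XX A Θ_XX'`.
Expanding `U₂ Δ_XX U₂ᵀ`, the two sides agree as soon as `Δ_XX Gᵀ Δ_XX' = Δ_XX'`. This holds
because `Δ` is positive semidefinite: factoring `Δ = Lᴴ L` with `L = [P Q]` gives `Δ_XX = Pᴴ P`
and `Δ_XX' = Pᴴ Q`, and any generalised inverse `H` of `Pᴴ P` satisfies `Pᴴ P H Pᴴ = Pᴴ`.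
-/

open Matrix
open scoped ComplexOrder

namespace Matrix

section StarOrderedRing

variable {R l m : Type*} [Fintype l] [Fintype m] [PartialOrder R] [Ring R] [StarRing R]
  [StarOrderedRing R] [NoZeroDivisors R]

theorem conjTranspose_mul_self_mul_mul_conjTranspose {P : Matrix l m R} {G : Matrix m m R}
    (hG : Pᴴ * P * G * (Pᴴ * P) = Pᴴ * P) : Pᴴ * P * G * Pᴴ = Pᴴ := by
  classical
  have h : (Pᴴ * P * G - 1) * (Pᴴ * P) = 0 := by
    rw [Matrix.sub_mul, Matrix.one_mul, hG, sub_self]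
  rwa [mul_conjTranspose_mul_self_eq_zero, Matrix.sub_mul, Matrix.one_mul, sub_eq_zero] at h

end StarOrderedRing

variable {𝕜 m n : Type*} [RCLike 𝕜] [Fintype m] [Fintype n]

theorem PosSemidef.exists_eq_conjTranspose_mul_self {A : Matrix n n 𝕜} (hA : A.PosSemidef) :
    ∃ L : Matrix n n 𝕜, A = Lᴴ * L := by
  classical
  open scoped MatrixOrder Matrix.Norms.L2Operator in
  exact CStarAlgebra.nonneg_iff_eq_star_mul_self.mp hA.nonneg

theorem PosSemidef.exists_eq_conjTranspose_mul_of_fromBlocks {D : Matrix m m 𝕜}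
    {B : Matrix m n 𝕜} {E : Matrix n n 𝕜} (h : (fromBlocks D B Bᴴ E).PosSemidef) :
    ∃ (P : Matrix (m ⊕ n) m 𝕜) (Q : Matrix (m ⊕ n) n 𝕜), D = Pᴴ * P ∧ B = Pᴴ * Q := by
  obtain ⟨L, hL⟩ := h.exists_eq_conjTranspose_mul_self
  rw [← fromCols_toCols L, conjTranspose_fromCols_eq_fromRows_conjTranspose,
    fromRows_mul_fromCols] at hL
  obtain ⟨hD, hB, -, -⟩ := fromBlocks_inj.mp hL
  exact ⟨_, _, hD, hB⟩

theorem mul_mul_eq_of_fromBlocks_posSemidef {D G : Matrix m m 𝕜} {B : Matrix m n 𝕜}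
    {E : Matrix n n 𝕜} (h : (fromBlocks D B Bᴴ E).PosSemidef) (hG : D * G * D = D) :
    D * G * B = B := by
  obtain ⟨P, Q, rfl, rfl⟩ := h.exists_eq_conjTranspose_mul_of_fromBlocks
  rw [← Matrix.mul_assoc, conjTranspose_mul_self_mul_mul_conjTranspose hG]

end Matrix

theorem stmt4_general (n m : ℕ) (σ2 : ℝ)
    (ΘXX KXX : Matrix (Fin n) (Fin n) ℝ) (hΘsymm : ΘXX.IsSymm) (hKsymm : KXX.IsSymm)
    (ΘXX' KXX' : Matrix (Fin n) (Fin m) ℝ)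
    (ΘX'X' KX'X' : Matrix (Fin m) (Fin m) ℝ)
    (hΘinv : IsUnit (ΘXX + σ2 • (1 : Matrix (Fin n) (Fin n) ℝ)).det)
    (hΔ : (Matrix.fromBlocks (ΘXX - KXX) (ΘXX' - KXX') (ΘXX' - KXX')ᵀ
      (ΘX'X' - KX'X')).PosSemidef)
    (G : Matrix (Fin n) (Fin n) ℝ)
    (hG : (ΘXX - KXX) * G * (ΘXX - KXX) = ΘXX - KXX) :
    let ΘX'X := ΘXX'ᵀ
    let KX'X := KXX'ᵀ
    let ΔXX := ΘXX - KXX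
    let ΔXX' := ΘXX' - KXX'
    let ΔX'X := (ΘXX' - KXX')ᵀ
    let ΔX'X' := ΘX'X' - KX'X'
    let SigRP := KX'X' - ΘX'X * (ΘXX + σ2 • 1)⁻¹ * KXX'
      - KX'X * (ΘXX + σ2 • 1)⁻¹ * ΘXX'
      + ΘX'X * (ΘXX + σ2 • 1)⁻¹ * (KXX + σ2 • 1) * (ΘXX + σ2 • 1)⁻¹ * ΘXX'
    let SigNTKGP := ΘX'X' - ΘX'X * (ΘXX + σ2 • 1)⁻¹ * ΘXX'
    let U1 := ΔX'X' - ΔX'X * G * ΔXX'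
    let U2 := ΘX'X * (ΘXX + σ2 • 1)⁻¹ - ΔX'X * G
    SigNTKGP - SigRP = U1 + U2 * ΔXX * U2ᵀ := by
  dsimp only
  set X := ΘXX + σ2 • (1 : Matrix (Fin n) (Fin n) ℝ) with hX
  set D := ΘXX - KXX with hD
  set B := ΘXX' - KXX' with hB
  set E := ΘX'X' - KX'X' with hE
  have hXinvT : X⁻¹ᵀ = X⁻¹ := by
    rw [transpose_nonsing_inv, hX, transpose_add, hΘsymm.eq, transpose_smul, transpose_one]
  have hDT : Dᵀ = D := by rw [hD, transpose_sub, hΘsymm.eq, hKsymm.eq]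
  have hDGB : D * (Gᵀ * B) = B := by
    rw [← Matrix.mul_assoc]
    refine mul_mul_eq_of_fromBlocks_posSemidef (E := E) ?_ ?_
    · rwa [conjTranspose_eq_transpose_of_trivial]
    · simpa only [transpose_mul, hDT, Matrix.mul_assoc] using congrArg transpose hG
  have hBGD {p : ℕ} (M : Matrix (Fin n) (Fin p) ℝ) : Bᵀ * (G * (D * M)) = Bᵀ * M := by
    have h : Bᵀ * (G * D) = Bᵀ := by
      simpa only [transpose_mul, hDT, transpose_transpose, Matrix.mul_assoc] using
        congrArg transpose hDGB
    rw [← Matrix.mul_assoc G, ← Matrix.mul_assoc, h]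
  have hXinv_mul {p : ℕ} (M : Matrix (Fin n) (Fin p) ℝ) : X⁻¹ * (X * M) = M := by
    rw [← Matrix.mul_assoc, nonsing_inv_mul X hΘinv, Matrix.one_mul]
  rw [show KXX' = ΘXX' - B by rw [hB, sub_sub_cancel],
    show KX'X' = ΘX'X' - E by rw [hE, sub_sub_cancel],
    show KXX + σ2 • 1 = X - D by rw [hX, hD]; abel]
  simp only [transpose_sub, transpose_mul, transpose_transpose, hXinvT, Matrix.mul_sub,
    Matrix.sub_mul, Matrix.mul_assoc, hXinv_mul, hBGD, hDGB]
  abel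

/-- identity (27) in the proof of Proposition 2. With `Δ = Θ − K`
positive semidefinite (as a block matrix), `G` a generalised inverse of `Δ_XX`,
`U₁ = Δ_X'X' − Δ_X'X G Δ_XX'` and `U₂ = Θ_X'X (Θ_XX + σ²I)⁻¹ − Δ_X'X G`, we have
`Σ_NTKGP − Σ_RP = U₁ + U₂ Δ_XX U₂ᵀ`. -/
theorem stmt4 (n m : ℕ) (hn : 0 < n) (hm : 0 < m) (σ2 : ℝ) (hσ : 0 ≤ σ2)
    (ΘXX KXX : Matrix (Fin n) (Fin n) ℝ) (hΘsymm : ΘXX.IsSymm) (hKsymm : KXX.IsSymm)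
    (ΘXX' KXX' : Matrix (Fin n) (Fin m) ℝ)
    (ΘX'X' KX'X' : Matrix (Fin m) (Fin m) ℝ)
    (hΘinv : IsUnit (ΘXX + σ2 • (1 : Matrix (Fin n) (Fin n) ℝ)).det)
    (hΔ : (Matrix.fromBlocks (ΘXX - KXX) (ΘXX' - KXX') (ΘXX' - KXX')ᵀ
      (ΘX'X' - KX'X')).PosSemidef)
    (G : Matrix (Fin n) (Fin n) ℝ)
    (hG : (ΘXX - KXX) * G * (ΘXX - KXX) = ΘXX - KXX) :
    let ΘX'X := ΘXX'ᵀ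
    let KX'X := KXX'ᵀ
    let ΔXX := ΘXX - KXX
    let ΔXX' := ΘXX' - KXX'
    let ΔX'X := (ΘXX' - KXX')ᵀ
    let ΔX'X' := ΘX'X' - KX'X'
    let SigRP := KX'X' - ΘX'X * (ΘXX + σ2 • 1)⁻¹ * KXX'
      - KX'X * (ΘXX + σ2 • 1)⁻¹ * ΘXX'
      + ΘX'X * (ΘXX + σ2 • 1)⁻¹ * (KXX + σ2 • 1) * (ΘXX + σ2 • 1)⁻¹ * ΘXX'
    let SigNTKGP := ΘX'X' - ΘX'X * (ΘXX + σ2 • 1)⁻¹ * ΘXX'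
    let U1 := ΔX'X' - ΔX'X * G * ΔXX'
    let U2 := ΘX'X * (ΘXX + σ2 • 1)⁻¹ - ΔX'X * G
    SigNTKGP - SigRP = U1 + U2 * ΔXX * U2ᵀ :=
  stmt4_general n m σ2 ΘXX KXX hΘsymm hKsymm ΘXX' KXX' ΘX'X' KX'X' hΘinv hΔ G hG
end

section
/- (Generalised Schur complement positivity, used in the proof of Proposition 2.) Let A be a symmetric n×n real matrix, B an n×m real matrix, and D a symmetric m×m real matrix such that the (n+m)×(n+m) block matrix [[A, B],[Bᵀ, D]] is positive semidefinite. If G is any n×n matrix with A G A = A (a generalised inverse of A), then the generalised Schur complement D − Bᵀ G B is positive semidefinite. -/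
open Matrix

open scoped ComplexOrder

/-!
Write `M = [[A, B], [Bᴴ, D]]`. If `A X = B`, then `D - Bᴴ X = Vᴴ M V` for `V = [-X; 1]`, so it is
positive semidefinite. A generalised inverse provides such an `X`, namely `X = G B`: positivity of
`M` forces `Bᴴ x = 0` whenever `A x = 0` (the form of `M` vanishes at `(x, 0)`, so `M (x, 0) = 0`),
and the columns of `Gᴴ A - 1` lie in the kernel of `A = Aᴴ`; hence `Bᴴ Gᴴ A = Bᴴ`, i.e. `A G B = B`.
-/

namespace Matrix

variable {R 𝕜 n m k : Type*} [Fintype n] [Fintype m]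

theorem conjTranspose_fromRows_one_mul_fromBlocks_mul_fromRows_one [Ring R] [StarRing R]
    [DecidableEq m] (A : Matrix n n R) (B : Matrix n m R) (C : Matrix m n R)
    (D : Matrix m m R) (X : Matrix n m R) :
    (fromRows X (1 : Matrix m m R))ᴴ * fromBlocks A B C D * fromRows X (1 : Matrix m m R) =
      Xᴴ * A * X + Xᴴ * B + C * X + D := by
  rw [conjTranspose_fromRows_eq_fromCols_conjTranspose, conjTranspose_one,
    fromCols_mul_fromBlocks, fromCols_mul_fromRows]
  simp only [Matrix.one_mul, Matrix.mul_one, Matrix.add_mul]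
  abel

theorem PosSemidef.sub_conjTranspose_mul_of_fromBlocks [Ring R] [PartialOrder R] [StarRing R]
    [DecidableEq m] {A : Matrix n n R} {B : Matrix n m R} {D : Matrix m m R}
    (h : (fromBlocks A B Bᴴ D).PosSemidef) {X : Matrix n m R} (hX : A * X = B) :
    (D - Bᴴ * X).PosSemidef := by
  convert h.conjTranspose_mul_mul_same (fromRows (-X) (1 : Matrix m m R)) using 1
  rw [conjTranspose_fromRows_one_mul_fromBlocks_mul_fromRows_one, ← hX]
  simp only [conjTranspose_neg, Matrix.neg_mul, Matrix.mul_neg, neg_neg, Matrix.mul_assoc]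
  abel

variable [RCLike 𝕜] {A : Matrix n n 𝕜} {B : Matrix n m 𝕜} {D : Matrix m m 𝕜}

theorem PosSemidef.conjTranspose_mulVec_eq_zero_of_fromBlocks
    (h : (fromBlocks A B Bᴴ D).PosSemidef) {x : n → 𝕜} (hx : A *ᵥ x = 0) : Bᴴ *ᵥ x = 0 := by
  have hv : star (Sum.elim x 0) ⬝ᵥ fromBlocks A B Bᴴ D *ᵥ Sum.elim x 0 = 0 := by
    simp [fromBlocks_mulVec, hx, dotProduct, Fintype.sum_sum_type]
  have := congrArg (· ∘ Sum.inr) ((h.dotProduct_mulVec_zero_iff _).1 hv)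
  simpa [fromBlocks_mulVec] using this

theorem PosSemidef.conjTranspose_mul_eq_zero_of_fromBlocks [Fintype k]
    (h : (fromBlocks A B Bᴴ D).PosSemidef) {N : Matrix n k 𝕜} (hN : A * N = 0) :
    Bᴴ * N = 0 := by
  refine ext_iff_mulVec.2 fun v => ?_
  rw [← mulVec_mulVec, zero_mulVec]
  exact h.conjTranspose_mulVec_eq_zero_of_fromBlocks (by rw [mulVec_mulVec, hN, zero_mulVec])

theorem PosSemidef.mul_mul_eq_of_fromBlocks (h : (fromBlocks A B Bᴴ D).PosSemidef)
    {G : Matrix n n 𝕜} (hG : A * G * A = A) : A * (G * B) = B := by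
  classical
  have hA : Aᴴ = A := (isHermitian_fromBlocks_iff.1 h.isHermitian).1
  have hAN : A * (Gᴴ * A - 1) = 0 := by
    rw [Matrix.mul_sub, Matrix.mul_one, ← Matrix.mul_assoc, ← hA, ← conjTranspose_mul,
      ← conjTranspose_mul, ← Matrix.mul_assoc, hG, sub_self]
  have hBN := h.conjTranspose_mul_eq_zero_of_fromBlocks hAN
  rw [Matrix.mul_sub, Matrix.mul_one, sub_eq_zero, ← Matrix.mul_assoc] at hBN
  simpa [hA, Matrix.mul_assoc] using congrArg (·ᴴ) hBN

end Matrix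

theorem stmt6_general (n m : ℕ) (A : Matrix (Fin n) (Fin n) ℝ)
    (B : Matrix (Fin n) (Fin m) ℝ) (D : Matrix (Fin m) (Fin m) ℝ)
    (hpsd : (Matrix.fromBlocks A B Bᵀ D).PosSemidef)
    (G : Matrix (Fin n) (Fin n) ℝ) (hG : A * G * A = A) :
    (D - Bᵀ * G * B).PosSemidef := by
  rw [← conjTranspose_eq_transpose_of_trivial] at hpsd ⊢
  rw [Matrix.mul_assoc]
  exact hpsd.sub_conjTranspose_mul_of_fromBlocks (hpsd.mul_mul_eq_of_fromBlocks hG)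

/-- generalised Schur complement positivity. If the block matrix
`[[A, B],[Bᵀ, D]]` is positive semidefinite and `G` is a generalised inverse of `A`
(`A G A = A`), then the generalised Schur complement `D − Bᵀ G B` is positive
semidefinite. -/
theorem stmt6 (n m : ℕ) (A : Matrix (Fin n) (Fin n) ℝ) (hA : A.IsSymm)
    (B : Matrix (Fin n) (Fin m) ℝ) (D : Matrix (Fin m) (Fin m) ℝ) (hD : D.IsSymm)
    (hpsd : (Matrix.fromBlocks A B Bᵀ D).PosSemidef)
    (G : Matrix (Fin n) (Fin n) ℝ) (hG : A * G * A = A) :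
    (D - Bᵀ * G * B).PosSemidef :=
  stmt6_general n m A B D hpsd G hG
end

section
/- (Posterior covariance identity underlying Lemma 3 of Osband et al.) Let Z be an n×p real matrix and σ², λ > 0. Set M = ZᵀZ + (σ²/λ)I_p (which is invertible) and A = M⁻¹Zᵀ. Then λ(I − AZ)(I − AZ)ᵀ + σ² A Aᵀ = σ² M⁻¹. -/
open Matrix

/-! Write `M = ZᵀZ + c I` and `A = M⁻¹Zᵀ`. Then `I - AZ = M⁻¹(M - ZᵀZ) = c M⁻¹`, so
`(I - AZ)(I - AZ)ᵀ + c AAᵀ = c M⁻¹ (c I + ZᵀZ) M⁻¹ = c M⁻¹`, using that `M` is symmetric.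
With `c = σ²/λ`, multiplying by `λ` gives the identity; `M` is invertible because it is
positive definite. -/

namespace Matrix

theorem transpose_mul_self_add_smul_one_transpose {R m n : Type*} [CommRing R] [DecidableEq m]
    [Fintype n] (Z : Matrix n m R) (c : R) :
    (Zᵀ * Z + c • (1 : Matrix m m R))ᵀ = Zᵀ * Z + c • 1 := by
  rw [transpose_add, transpose_smul, transpose_one, transpose_mul, transpose_transpose]

section Ridge

variable {R m n : Type*} [CommRing R] [Fintype m] [DecidableEq m] [Fintype n]

theorem one_sub_inv_mul_transpose_mul_eq_smul_inv (Z : Matrix n m R) (c : R)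
    (hM : IsUnit (Zᵀ * Z + c • (1 : Matrix m m R)).det) :
    1 - (Zᵀ * Z + c • 1)⁻¹ * Zᵀ * Z = c • (Zᵀ * Z + c • 1)⁻¹ := by
  set M := Zᵀ * Z + c • (1 : Matrix m m R) with hM_def
  calc 1 - M⁻¹ * Zᵀ * Z = M⁻¹ * M - M⁻¹ * (Zᵀ * Z) := by
        rw [nonsing_inv_mul _ hM, Matrix.mul_assoc]
    _ = c • M⁻¹ := by
        rw [← Matrix.mul_sub, hM_def, add_sub_cancel_left, Matrix.mul_smul, Matrix.mul_one]

theorem ridge_covariance_identity (Z : Matrix n m R) (c : R)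
    (hM : IsUnit (Zᵀ * Z + c • (1 : Matrix m m R)).det) :
    let M := Zᵀ * Z + c • (1 : Matrix m m R)
    let A := M⁻¹ * Zᵀ
    (1 - A * Z) * (1 - A * Z)ᵀ + c • (A * Aᵀ) = c • M⁻¹ := by
  intro M A
  have hsymm : M⁻¹ᵀ = M⁻¹ := by
    rw [transpose_nonsing_inv, transpose_mul_self_add_smul_one_transpose]
  have hIAZ : 1 - A * Z = c • M⁻¹ := one_sub_inv_mul_transpose_mul_eq_smul_inv Z c hM
  have hAAt : A * Aᵀ = M⁻¹ * (Zᵀ * Z) * M⁻¹ := by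
    simp only [A, transpose_mul, transpose_transpose, hsymm, Matrix.mul_assoc]
  calc (1 - A * Z) * (1 - A * Z)ᵀ + c • (A * Aᵀ)
      = c • (M⁻¹ * (c • 1 + Zᵀ * Z) * M⁻¹) := by
        rw [hIAZ, hAAt, transpose_smul, hsymm]
        simp only [Matrix.mul_add, Matrix.add_mul, Matrix.mul_smul, Matrix.smul_mul,
          Matrix.mul_one, smul_add]
    _ = c • M⁻¹ := by
        rw [add_comm, nonsing_inv_mul _ hM, Matrix.one_mul]

end Ridge

theorem posDef_transpose_mul_self_add_smul_one {m n : Type*} [Fintype m] [DecidableEq m]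
    [Fintype n] (Z : Matrix n m ℝ) {c : ℝ} (hc : 0 < c) :
    (Zᵀ * Z + c • (1 : Matrix m m ℝ)).PosDef := by
  have hZ : (Zᵀ * Z).PosSemidef := by
    simpa only [conjTranspose_eq_transpose_of_trivial] using posSemidef_conjTranspose_mul_self Z
  exact PosDef.posSemidef_add hZ (PosDef.one.smul hc)

end Matrix

/-- posterior covariance identity underlying Lemma 3 of Osband et al..
With `M = ZᵀZ + (σ²/λ)I` (which is invertible) and `A = M⁻¹Zᵀ`, we have
`λ(I − AZ)(I − AZ)ᵀ + σ² A Aᵀ = σ² M⁻¹`. -/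
theorem stmt13 (n p : ℕ) (Z : Matrix (Fin n) (Fin p) ℝ)
    (σ2 lam : ℝ) (hσ : 0 < σ2) (hlam : 0 < lam) :
    let M : Matrix (Fin p) (Fin p) ℝ := Zᵀ * Z + (σ2 / lam) • 1
    let A := M⁻¹ * Zᵀ
    IsUnit M.det ∧
      lam • ((1 - A * Z) * (1 - A * Z)ᵀ) + σ2 • (A * Aᵀ) = σ2 • M⁻¹ := by
  intro M A
  have hM : IsUnit M.det :=
    (posDef_transpose_mul_self_add_smul_one Z (div_pos hσ hlam)).det_pos.ne'.isUnit
  have hσ2 : σ2 = lam * (σ2 / lam) := by field_simp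
  refine ⟨hM, ?_⟩
  conv_lhs => rw [hσ2, mul_smul, ← smul_add, ridge_covariance_identity Z _ hM]
  rw [smul_smul, ← hσ2]
end
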